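/- arXiv:2311.15501 — 3 statements merged into one kernel-verified Lean document; each statement's English description precedes it below -/
import Mathlib

section
/- If Γ is an unbalanced signed graph on n vertices containing no unbalanced signed complete graph on r+1 vertices as a subgraph, then the number of edges of Γ satisfies e(Γ) ≤ n(n-1)/2 - (n - r). -/
/-!
If `Γ` has a negative triangle, let `T` be a largest vertex set spanning a complete graph and
containing it. An `(r+1)`-subset of `T` containing the triangle would be an unbalanced `K_{r+1}`,
so `|T| ≤ r`, and by maximality every vertex outside `T` has a non-neighbour in `T`: this gives
`n - |T| ≥ n - r` distinct non-edges.

Otherwise take a shortest negative closed walk `C` based at `a`; it has length at least `4` and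
`a` has no chords on it. A vertex adjacent to every vertex of `C` would split `C` into triangles,
all positive, forcing `C` to be positive. Hence every vertex off `C` has a non-neighbour on `C`,
and together with the non-neighbours of `a` on `C` this gives `n - 3 ≥ n - r` non-edges.
-/

open Matrix BigOperators

/-- `A` is the adjacency matrix of a signed graph: symmetric, zero diagonal,
entries in `{0, 1, -1}`. -/
def IsSignedAdj {n : ℕ} (A : Matrix (Fin n) (Fin n) ℝ) : Prop :=
  (∀ i j, A i j = A j i) ∧ (∀ i, A i i = 0) ∧ (∀ i j, A i j = 0 ∨ A i j = 1 ∨ A i j = -1)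

/-- The underlying simple graph of the signed graph with adjacency matrix `A`. -/
def graphOf {n : ℕ} (A : Matrix (Fin n) (Fin n) ℝ) : SimpleGraph (Fin n) where
  Adj i j := i ≠ j ∧ A i j ≠ 0 ∧ A j i ≠ 0
  symm := by constructor; intro i j h; exact ⟨h.1.symm, h.2.2, h.2.1⟩
  loopless := by constructor; intro i h; exact h.1 rfl

/-- The sign of a walk: the product of the signs of its edges. -/
def walkSign {n : ℕ} (A : Matrix (Fin n) (Fin n) ℝ) {G : SimpleGraph (Fin n)}
    {u v : Fin n} (w : G.Walk u v) : ℝ :=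
  (w.darts.map fun d => A d.fst d.snd).prod

/-- A signed graph is unbalanced if it has a cycle with sign `-1`. -/
def IsUnbalanced {n : ℕ} (A : Matrix (Fin n) (Fin n) ℝ) : Prop :=
  ∃ (u : Fin n) (w : (graphOf A).Walk u u), w.IsCycle ∧ walkSign A w = -1

/-- Every cycle contained in `S` is positive. -/
def IsBalancedOn {n : ℕ} (A : Matrix (Fin n) (Fin n) ℝ) (S : Set (Fin n)) : Prop :=
  ∀ (u : Fin n) (w : (graphOf A).Walk u u), w.IsCycle → (∀ v ∈ w.support, v ∈ S) →
    walkSign A w = 1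

/-- `S` spans a complete subgraph. -/
def IsCompleteOn {n : ℕ} (A : Matrix (Fin n) (Fin n) ℝ) (S : Set (Fin n)) : Prop :=
  ∀ i ∈ S, ∀ j ∈ S, i ≠ j → A i j ≠ 0

/-- `S` spans an unbalanced complete subgraph. -/
def UnbalancedCompleteOn {n : ℕ} (A : Matrix (Fin n) (Fin n) ℝ) (S : Set (Fin n)) : Prop :=
  IsCompleteOn A S ∧ ∃ (u : Fin n) (w : (graphOf A).Walk u u), w.IsCycle ∧
    (∀ v ∈ w.support, v ∈ S) ∧ walkSign A w = -1

/-- The signed graph contains no unbalanced complete subgraph on `k` vertices. -/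
def KminusFree {n : ℕ} (A : Matrix (Fin n) (Fin n) ℝ) (k : ℕ) : Prop :=
  ¬ ∃ S : Finset (Fin n), S.card = k ∧ UnbalancedCompleteOn A ↑S

/-- The largest eigenvalue of `A`. -/
noncomputable def lam1 {n : ℕ} (A : Matrix (Fin n) (Fin n) ℝ) : ℝ :=
  sSup {μ : ℝ | ∃ x : Fin n → ℝ, x ≠ 0 ∧ A.mulVec x = μ • x}

/-- The signed graph `Γ_{1,r-2}`: vertices `1,…,n-1` form an all-positive complete graph,
vertex `0` is joined to vertex `1` by a negative edge and to vertices `2,…,r-1`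
by positive edges. -/
def GammaMat (n r : ℕ) : Matrix (Fin n) (Fin n) ℝ :=
  Matrix.of fun i j =>
    if i = j then 0
    else if i.val = 0 then (if j.val = 1 then -1 else if j.val < r then 1 else 0)
    else if j.val = 0 then (if i.val = 1 then -1 else if i.val < r then 1 else 0)
    else 1

open Finset

namespace SimpleGraph

variable {V : Type*} [Fintype V] [DecidableEq V] (G : SimpleGraph V) [DecidableRel G.Adj]

theorem card_edgeFinset_add_card_edgeFinset_compl :
    #G.edgeFinset + #Gᶜ.edgeFinset = (Fintype.card V).choose 2 := by
  have hcompl : Gᶜ.edgeFinset = (⊤ : SimpleGraph V).edgeFinset \ G.edgeFinset := by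
    ext e
    induction e using Sym2.ind
    simp [compl_adj]
  have hsub : G.edgeFinset ⊆ (⊤ : SimpleGraph V).edgeFinset := edgeFinset_mono le_top
  rw [hcompl, card_sdiff_of_subset hsub, ← card_edgeFinset_top_eq_card_choose_two]
  have := card_le_card hsub
  omega

theorem card_compl_add_card_le_card_edgeFinset {T M : Finset V} {a : V}
    (hT : ∀ v ∉ T, ∃ u ∈ T, G.Adj v u) (ha : a ∈ T) (hM : M ⊆ T)
    (haM : ∀ x ∈ M, G.Adj a x) : #Tᶜ + #M ≤ #G.edgeFinset := by
  have : Nonempty V := ⟨a⟩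
  choose! f hfT hfG using hT
  have hout : Set.InjOn (fun v => s(v, f v)) (Tᶜ : Finset V) := by
    intro v hv w hw hvw
    simp only [coe_compl, Set.mem_compl_iff, mem_coe] at hv hw
    rcases Sym2.eq_iff.mp hvw with ⟨h, -⟩ | ⟨h, -⟩
    · exact h
    · exact absurd (h ▸ hfT w hw) hv
  have hin : Set.InjOn (fun x => s(a, x)) M := fun x _ y _ hxy => Sym2.congr_right.mp hxy
  have hdisj : Disjoint (Tᶜ.image fun v => s(v, f v)) (M.image fun x => s(a, x)) := by
    rw [Finset.disjoint_left]
    rintro _ he he'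
    obtain ⟨v, hv, rfl⟩ := mem_image.mp he
    obtain ⟨x, hx, hxv⟩ := mem_image.mp he'
    rw [mem_compl] at hv
    rcases Sym2.eq_iff.mp hxv with ⟨rfl, -⟩ | ⟨-, rfl⟩
    · exact hv ha
    · exact hv (hM hx)
  calc #Tᶜ + #M
      = #((Tᶜ.image fun v => s(v, f v)) ∪ M.image fun x => s(a, x)) := by
        rw [card_union_of_disjoint hdisj, card_image_of_injOn hout, card_image_of_injOn hin]
    _ ≤ #G.edgeFinset := by
        refine card_le_card fun e he => ?_
        simp only [mem_union, mem_image, mem_compl] at he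
        rcases he with ⟨v, hv, rfl⟩ | ⟨x, hx, rfl⟩
        · exact G.mem_edgeFinset.mpr (hfG v hv)
        · exact G.mem_edgeFinset.mpr (haM x hx)

end SimpleGraph

section SignedGraph

variable {n : ℕ}

/-- Closed walks are handled as lists: `pathSign A a xs a` is the sign of the closed walk
`a, xs, a`, with no cycle condition imposed. -/
def pathSign (A : Matrix (Fin n) (Fin n) ℝ) : Fin n → List (Fin n) → Fin n → ℝ
  | a, [], b => A a b
  | a, x :: xs, b => A a x * pathSign A x xs b

variable {A : Matrix (Fin n) (Fin n) ℝ}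

theorem pathSign_append (a c b : Fin n) (p q : List (Fin n)) :
    pathSign A a (p ++ c :: q) b = pathSign A a p c * pathSign A c q b := by
  induction p generalizing a with
  | nil => rfl
  | cons x xs ih => simp [pathSign, ih x, mul_assoc]

theorem IsSignedAdj.graphOf_adj_iff (hA : IsSignedAdj A) {i j : Fin n} :
    (graphOf A).Adj i j ↔ i ≠ j ∧ A i j ≠ 0 := by
  simp [graphOf, hA.1 j i]

theorem IsSignedAdj.compl_graphOf_adj_iff (hA : IsSignedAdj A) {i j : Fin n} :
    (graphOf A)ᶜ.Adj i j ↔ i ≠ j ∧ A i j = 0 := by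
  rw [SimpleGraph.compl_adj, hA.graphOf_adj_iff]
  tauto

theorem IsSignedAdj.mul_self_eq_one (hA : IsSignedAdj A) {i j : Fin n} (h : A i j ≠ 0) :
    A i j * A i j = 1 := by
  rcases hA.2.2 i j with h' | h' | h' <;> simp_all

theorem IsSignedAdj.pathSign_trichotomy (hA : IsSignedAdj A) (a b : Fin n) (xs : List (Fin n)) :
    pathSign A a xs b = 0 ∨ pathSign A a xs b = 1 ∨ pathSign A a xs b = -1 := by
  induction xs generalizing a with
  | nil => exact hA.2.2 a b
  | cons x xs ih =>
    rcases hA.2.2 a x with h | h | h <;> rcases ih x with h' | h' | h' <;>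
      simp [pathSign, h, h']

theorem IsSignedAdj.eq_mul_of_triangle_ne_neg_one (hA : IsSignedAdj A) {v a b : Fin n}
    (hva : A v a ≠ 0) (hvb : A v b ≠ 0) (hab : A a b ≠ 0)
    (htri : A v a * (A a b * A b v) ≠ -1) : A a b = A a v * A v b := by
  rw [hA.1 a v, hA.1 b v] at *
  rcases hA.2.2 v a with h₁ | h₁ | h₁ <;> rcases hA.2.2 v b with h₂ | h₂ | h₂ <;>
    rcases hA.2.2 a b with h₃ | h₃ | h₃ <;> simp_all

theorem IsSignedAdj.pathSign_eq_of_hub (hA : IsSignedAdj A)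
    (hpos : ∀ x y z, A x y * (A y z * A z x) ≠ -1) {v : Fin n} :
    ∀ {a b : Fin n} {xs : List (Fin n)}, (∀ x ∈ a :: b :: xs, A v x ≠ 0) →
      pathSign A a xs b ≠ 0 → pathSign A a xs b = A a v * A v b
  | a, b, [], hv, hab => hA.eq_mul_of_triangle_ne_neg_one (hv a (by simp)) (hv b (by simp)) hab
      (hpos v a b)
  | a, b, x :: xs, hv, hne => by
    have hax : A a x ≠ 0 := left_ne_zero_of_mul hne
    have hrest : pathSign A x xs b ≠ 0 := right_ne_zero_of_mul hne
    have hvx : A v x ≠ 0 := hv x (by simp)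
    have ih := hA.pathSign_eq_of_hub hpos
      (fun y hy => hv y (by simp only [List.mem_cons] at hy ⊢; tauto)) hrest
    rw [pathSign, ih, hA.eq_mul_of_triangle_ne_neg_one (hv a (by simp)) hvx hax (hpos v a x),
      hA.1 x v]
    linear_combination A a v * A v b * hA.mul_self_eq_one hvx

theorem IsSignedAdj.exists_eq_zero_of_pathSign_eq_neg_one (hA : IsSignedAdj A)
    (hpos : ∀ x y z, A x y * (A y z * A z x) ≠ -1) {a : Fin n} {xs : List (Fin n)}
    (hneg : pathSign A a xs a = -1) (v : Fin n) : ∃ x ∈ a :: xs, A v x = 0 := by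
  by_contra! hv
  have hva : A v a ≠ 0 := hv a (by simp)
  have := hA.pathSign_eq_of_hub (a := a) (b := a) (xs := xs) hpos
    (fun x hx => hv x (by simpa using hx)) (by rw [hneg]; norm_num)
  rw [hneg, hA.1 a v, hA.mul_self_eq_one hva] at this
  norm_num at this

variable {G : SimpleGraph (Fin n)}

theorem walkSign_cons {u v w : Fin n} (h : G.Adj u v) (p : G.Walk v w) :
    walkSign A (.cons h p) = A u v * walkSign A p := by
  simp [walkSign]

theorem mul_walkSign_eq_pathSign (u : Fin n) :
    ∀ {v w : Fin n} (p : G.Walk v w), A u v * walkSign A p = pathSign A u p.support.dropLast w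
  | _, _, .nil => by simp [walkSign, pathSign]
  | _, _, .cons h p => by
    rw [walkSign_cons, SimpleGraph.Walk.support_cons, ← p.cons_tail_support,
      List.dropLast_cons_cons, p.cons_tail_support, pathSign, ← mul_walkSign_eq_pathSign _ p]

theorem IsUnbalanced.exists_pathSign_eq_neg_one (h : IsUnbalanced A) :
    ∃ a xs, pathSign A a xs a = -1 := by
  obtain ⟨u, w, -, hw⟩ := h
  cases w with
  | nil => norm_num [walkSign] at hw
  | cons h p => exact ⟨u, _, by rw [← mul_walkSign_eq_pathSign, ← walkSign_cons h, hw]⟩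

theorem UnbalancedCompleteOn.mono {S T : Set (Fin n)} (hS : UnbalancedCompleteOn A S)
    (hST : S ⊆ T) (hT : IsCompleteOn A T) : UnbalancedCompleteOn A T := by
  obtain ⟨-, u, w, hw, hsupp, hsign⟩ := hS
  exact ⟨hT, u, w, hw, fun v hv => hST (hsupp v hv), hsign⟩

theorem IsSignedAdj.unbalancedCompleteOn_triangle (hA : IsSignedAdj A) {a b c : Fin n}
    (htri : A a b * (A b c * A c a) = -1) :
    UnbalancedCompleteOn A ↑({a, b, c} : Finset (Fin n)) := by
  have hab : A a b ≠ 0 := left_ne_zero_of_mul (by rw [htri]; norm_num)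
  have hbc : A b c ≠ 0 := left_ne_zero_of_mul (right_ne_zero_of_mul (by rw [htri]; norm_num))
  have hca : A c a ≠ 0 := right_ne_zero_of_mul (right_ne_zero_of_mul (by rw [htri]; norm_num))
  have hne {i j : Fin n} (h : A i j ≠ 0) : i ≠ j := by rintro rfl; exact h (hA.2.1 i)
  have hadj {i j : Fin n} (h : A i j ≠ 0) : (graphOf A).Adj i j :=
    hA.graphOf_adj_iff.mpr ⟨hne h, h⟩
  refine ⟨?_, a, .cons (hadj hab) (.cons (hadj hbc) (.cons (hadj hca) .nil)), ?_, ?_, ?_⟩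
  · intro i hi j hj hij
    simp only [Finset.coe_insert, Finset.coe_singleton, Set.mem_insert_iff,
      Set.mem_singleton_iff] at hi hj
    rcases hi with rfl | rfl | rfl <;> rcases hj with rfl | rfl | rfl <;>
      first | exact absurd rfl hij | assumption | (rw [hA.1]; assumption)
  · rw [SimpleGraph.Walk.cons_isCycle_iff]
    simp [hne hab, hne hbc, hne hca, (hne hab).symm, (hne hca).symm]
  · simp
  · simpa [walkSign] using htri

theorem exists_shortest_pathSign_eq_neg_one (h : ∃ a xs, pathSign A a xs a = -1) :
    ∃ a xs, pathSign A a xs a = -1 ∧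
      ∀ a' xs', pathSign A a' xs' a' = -1 → xs.length ≤ xs'.length := by
  classical
  have hlen : ∃ k, ∃ a xs, pathSign A a xs a = -1 ∧ xs.length = k :=
    let ⟨a, xs, hxs⟩ := h; ⟨_, a, xs, hxs, rfl⟩
  obtain ⟨a, xs, hneg, hk⟩ := Nat.find_spec hlen
  exact ⟨a, xs, hneg, fun a' xs' h' => hk ▸ Nat.find_min' hlen ⟨a', xs', h', rfl⟩⟩

/-- A chord `a c` would split the walk into two shorter closed walks whose signs multiply to
`-1`. -/
theorem IsSignedAdj.eq_zero_of_shortest (hA : IsSignedAdj A) {a c : Fin n}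
    {p q : List (Fin n)} (hneg : pathSign A a (p ++ c :: q) a = -1)
    (hmin : ∀ a' xs', pathSign A a' xs' a' = -1 → (p ++ c :: q).length ≤ xs'.length)
    (hp : p ≠ []) (hq : q ≠ []) : A a c = 0 := by
  by_contra hac
  have hsplit : pathSign A a (p ++ [c]) a * pathSign A c (q ++ [a]) c = -1 := by
    rw [pathSign_append, pathSign_append, ← hneg, pathSign_append]
    simp only [pathSign]
    rw [hA.1 c a]
    linear_combination (pathSign A a p c * pathSign A c q a) * hA.mul_self_eq_one hac
  have hp' := List.length_pos_iff.mpr hp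
  have hq' := List.length_pos_iff.mpr hq
  rcases hA.pathSign_trichotomy a a (p ++ [c]) with h₁ | h₁ | h₁ <;>
    rcases hA.pathSign_trichotomy c c (q ++ [a]) with h₂ | h₂ | h₂ <;>
    rw [h₁, h₂] at hsplit <;> norm_num at hsplit
  · have := hmin _ _ h₂
    simp only [List.length_append, List.length_cons, List.length_nil] at this
    omega
  · have := hmin _ _ h₁
    simp only [List.length_append, List.length_cons, List.length_nil] at this
    omega

open Classical in
theorem KminusFree.le_card_compl_edgeFinset {r : ℕ} (hA : IsSignedAdj A)
    (hfree : KminusFree A (r + 1)) {S₀ : Finset (Fin n)} (hS₀ : UnbalancedCompleteOn A S₀)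
    (hcard : #S₀ ≤ r + 1) : n - r ≤ #(graphOf A)ᶜ.edgeFinset := by
  obtain ⟨T, hT, hmax⟩ := exists_max_image
    (univ.filter fun T => S₀ ⊆ T ∧ IsCompleteOn A ↑T) card ⟨S₀, by simp [hS₀.1]⟩
  obtain ⟨hS₀T, hTc⟩ := (mem_filter.mp hT).2
  have hTr : #T ≤ r := by
    by_contra! h
    obtain ⟨S, hS₀S, hST, hS⟩ := exists_subsuperset_card_eq hS₀T hcard h
    exact hfree ⟨S, hS, hS₀.mono (coe_subset.mpr hS₀S)
      fun i hi j hj => hTc i (hST hi) j (hST hj)⟩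
  have hdom : ∀ v ∉ T, ∃ u ∈ T, (graphOf A)ᶜ.Adj v u := by
    intro v hv
    by_contra! h
    have hvT : ∀ u ∈ T, v ≠ u → A v u ≠ 0 := fun u hu hvu hA0 =>
      h u hu (hA.compl_graphOf_adj_iff.mpr ⟨hvu, hA0⟩)
    have hcomplete : IsCompleteOn A ↑(insert v T) := by
      intro i hi j hj hij
      simp only [coe_insert, Set.mem_insert_iff, mem_coe] at hi hj
      rcases hi with rfl | hi <;> rcases hj with rfl | hj
      · exact absurd rfl hij
      · exact hvT j hj hij
      · rw [hA.1]; exact hvT i hi hij.symm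
      · exact hTc i hi j hj hij
    have := hmax (insert v T)
      (mem_filter.mpr ⟨mem_univ _, hS₀T.trans (subset_insert v T), hcomplete⟩)
    rw [card_insert_of_notMem hv] at this
    omega
  obtain ⟨u, w, -, hsupp, -⟩ := hS₀.2
  have := (graphOf A)ᶜ.card_compl_add_card_le_card_edgeFinset hdom
    (hS₀T (hsupp u w.start_mem_support)) (empty_subset T) (by simp)
  rw [card_compl, Fintype.card_fin] at this
  omega

open Classical in
theorem IsSignedAdj.sub_three_le_card_compl_edgeFinset (hA : IsSignedAdj A)
    (hunb : IsUnbalanced A) (hpos : ∀ x y z, A x y * (A y z * A z x) ≠ -1) :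
    n - 3 ≤ #(graphOf A)ᶜ.edgeFinset := by
  obtain ⟨a, xs, hneg, hmin⟩ :=
    exists_shortest_pathSign_eq_neg_one hunb.exists_pathSign_eq_neg_one
  obtain ⟨b, m, z, rfl⟩ : ∃ b m z, xs = b :: (m ++ [z]) := by
    match xs, hneg with
    | [], h => simp [pathSign, hA.2.1] at h
    | [b], h =>
      simp only [pathSign, hA.1 b a] at h
      nlinarith [mul_self_nonneg (A a b)]
    | [b, c], h => exact absurd h (hpos a b c)
    | b :: c :: d :: ys, _ =>
      exact ⟨b, (c :: d :: ys).dropLast, (c :: d :: ys).getLast (by simp),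
        by rw [List.dropLast_append_getLast]⟩
  set T := (a :: b :: (m ++ [z])).toFinset
  have hchord : ∀ x ∈ m, A a x = 0 := by
    intro x hx
    obtain ⟨m₁, m₂, rfl⟩ := List.append_of_mem hx
    exact hA.eq_zero_of_shortest (p := b :: m₁) (q := m₂ ++ [z]) (by simpa using hneg)
      (by simpa using hmin) (by simp) (by simp)
  have hdom : ∀ v ∉ T, ∃ u ∈ T, (graphOf A)ᶜ.Adj v u := by
    intro v hv
    obtain ⟨x, hx, hvx⟩ := hA.exists_eq_zero_of_pathSign_eq_neg_one hpos hneg v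
    have hxT : x ∈ T := List.mem_toFinset.mpr hx
    exact ⟨x, hxT, hA.compl_graphOf_adj_iff.mpr ⟨fun h => hv (h ▸ hxT), hvx⟩⟩
  have hstar : ∀ x ∈ T \ {a, b, z}, (graphOf A)ᶜ.Adj a x := by
    intro x hx
    simp only [T, mem_sdiff, List.mem_toFinset, List.mem_cons, List.mem_append,
      mem_insert, mem_singleton] at hx
    have hxm : x ∈ m := by tauto
    exact hA.compl_graphOf_adj_iff.mpr ⟨fun h => hx.2 (.inl h.symm), hchord x hxm⟩
  have := (graphOf A)ᶜ.card_compl_add_card_le_card_edgeFinset hdom (by simp [T])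
    sdiff_subset hstar
  have := le_card_sdiff {a, b, z} T
  have : #({a, b, z} : Finset (Fin n)) ≤ 3 := card_le_three
  rw [card_compl, Fintype.card_fin] at *
  omega

end SignedGraph

/-- If `Γ` is an unbalanced signed graph on `n` vertices containing no unbalanced
complete subgraph on `r+1` vertices, then `e(Γ) ≤ n(n-1)/2 - (n-r)`. -/
theorem stmt0 {n r : ℕ} (hr : 3 ≤ r) (A : Matrix (Fin n) (Fin n) ℝ)
    (hA : IsSignedAdj A) (hunb : IsUnbalanced A) (hfree : KminusFree A (r + 1)) :
    (graphOf A).edgeSet.ncard ≤ n * (n - 1) / 2 - (n - r) := by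
  classical
  have hcompl : n - r ≤ #(graphOf A)ᶜ.edgeFinset := by
    by_cases htri : ∃ a b c, A a b * (A b c * A c a) = -1
    · obtain ⟨a, b, c, htri⟩ := htri
      exact hfree.le_card_compl_edgeFinset hA (hA.unbalancedCompleteOn_triangle htri)
        (card_le_three.trans (by omega))
    · exact (Nat.sub_le_sub_left hr n).trans
        (hA.sub_three_le_card_compl_edgeFinset hunb fun a b c h => htri ⟨a, b, c, h⟩)
  have hsum := (graphOf A).card_edgeFinset_add_card_edgeFinset_compl
  rw [Fintype.card_fin, Nat.choose_two_right] at hsum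
  rw [← SimpleGraph.coe_edgeFinset, Set.ncard_coe_finset]
  omega
end

section
/- Let Γ be a signed graph on n vertices with balanced clique number ω_b(Γ). Then λ_1(Γ) ≤ n(1 - 1/ω_b(Γ)). -/
/-!
Let `A x = μ x` with `x ≠ 0`. Then `μ ‖x‖² = xᵀ A x ≤ |x|ᵀ B |x|`, where `B` is the adjacency
matrix of the graph of the pairs `kl` with `A_kl x_k x_l > 0`. Switching `A` by the signs of `x`
makes exactly these pairs positive edges, so every clique of that graph spans a balanced complete
subgraph and has at most `ω` vertices. The Motzkin–Straus inequality
`yᵀ B y ≤ (1 - 1/ω) (∑ y)²` for `y ≥ 0` and Cauchy–Schwarz `(∑ |x_k|)² ≤ n ‖x‖²` then give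
`μ ≤ n (1 - 1/ω)`. Motzkin–Straus is proved by shifting: moving the weight of a vertex `j` onto a
non-neighbour `i` with `(B y)_j ≤ (B y)_i` does not decrease `yᵀ B y`, and once the support of `y`
is a clique, `yᵀ B y ≤ (∑ y)² - ∑ y²`.
-/

open Matrix BigOperators

open Finset

namespace Matrix

variable {V R : Type*} [Fintype V] [DecidableEq V] [CommRing R]

theorem dotProduct_mulVec_add_single_sub_single {M : Matrix V V R} (hM : M.IsSymm) {i j : V}
    (hii : M i i = 0) (hjj : M j j = 0) (hij : M i j = 0) (y : V → R) (c : R) :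
    (y + (Pi.single i c - Pi.single j c)) ⬝ᵥ M *ᵥ (y + (Pi.single i c - Pi.single j c)) =
      y ⬝ᵥ M *ᵥ y + 2 * c * ((M *ᵥ y) i - (M *ᵥ y) j) := by
  set d : V → R := Pi.single i c - Pi.single j c
  have hd : ∀ v, d ⬝ᵥ v = c * v i - c * v j := by
    intro v; simp only [d, sub_dotProduct, single_dotProduct]
  have hMd : M *ᵥ d = fun k => c * M k i - c * M k j := by
    ext k
    simp only [d, mulVec_sub, mulVec_single, op_smul_eq_smul, Pi.sub_apply, Pi.smul_apply,
      col_apply, smul_eq_mul]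
  have hyd : y ⬝ᵥ M *ᵥ d = d ⬝ᵥ M *ᵥ y := by
    rw [dotProduct_mulVec, ← mulVec_transpose, hM.eq, dotProduct_comm]
  rw [mulVec_add, dotProduct_add, add_dotProduct, add_dotProduct, hyd, hd (M *ᵥ d), hMd,
    hd (M *ᵥ y)]
  simp only [hii, hjj, hij, hM.apply i j]
  ring

end Matrix

theorem sq_sum_le_mul_sum_sq_of_card_support_le {V : Type*} [Fintype V] {y : V → ℝ} {k : ℕ}
    (hk : #{i | y i ≠ 0} ≤ k) : (∑ i, y i) ^ 2 ≤ k * ∑ i, y i ^ 2 := by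
  rw [← sum_filter_ne_zero]
  calc (∑ i with y i ≠ 0, y i) ^ 2 ≤ #{i | y i ≠ 0} * ∑ i with y i ≠ 0, y i ^ 2 :=
        sq_sum_le_card_mul_sum_sq
    _ ≤ k * ∑ i, y i ^ 2 := by
        gcongr ?_ * ?_
        · exact_mod_cast hk
        · exact sum_le_sum_of_subset_of_nonneg (subset_univ _) fun i _ _ => sq_nonneg _

namespace SimpleGraph

variable {V : Type*} {G : SimpleGraph V}

theorem CliqueFree.card_le_of_isClique {ω : ℕ} (hG : G.CliqueFree (ω + 1)) {s : Finset V}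
    (hs : G.IsClique (s : Set V)) : #s ≤ ω := by
  by_contra! h
  obtain ⟨t, hts, ht⟩ := exists_subset_card_eq h
  exact hG t ⟨hs.subset (by exact_mod_cast hts), ht⟩

variable [Fintype V] [DecidableEq V] [DecidableRel G.Adj]

variable (G) in
theorem dotProduct_mulVec_adjMatrix_le_sq_sum_sub_sum_sq {y : V → ℝ} (hy : 0 ≤ y) :
    y ⬝ᵥ G.adjMatrix ℝ *ᵥ y ≤ (∑ k, y k) ^ 2 - ∑ k, y k ^ 2 := by
  rw [dotProduct_mulVec_adjMatrix, sq, sum_mul_sum, ← sum_sub_distrib]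
  refine sum_le_sum fun k _ => ?_
  calc (∑ l, if G.Adj k l then y k * y l else 0)
      ≤ ∑ l, (y k * y l - if k = l then y k * y l else 0) := by
        refine sum_le_sum fun l _ => ?_
        by_cases hkl : k = l
        · simp [hkl]
        · by_cases hadj : G.Adj k l
          · simp [hadj, hkl]
          · simpa [hadj, hkl] using mul_nonneg (hy k) (hy l)
    _ = ∑ l, y k * y l - y k ^ 2 := by
        rw [sum_sub_distrib, sum_ite_eq, if_pos (mem_univ k), sq]

theorem exists_shift_of_not_adj_of_mulVec_le {y : V → ℝ} (hy : 0 ≤ y) {i j : V} (hij : i ≠ j)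
    (hadj : ¬G.Adj i j) (hi : y i ≠ 0) (hj : y j ≠ 0)
    (hle : (G.adjMatrix ℝ *ᵥ y) j ≤ (G.adjMatrix ℝ *ᵥ y) i) :
    ∃ z : V → ℝ, 0 ≤ z ∧ ∑ k, z k = ∑ k, y k ∧ #{k | z k ≠ 0} < #{k | y k ≠ 0} ∧
      y ⬝ᵥ G.adjMatrix ℝ *ᵥ y ≤ z ⬝ᵥ G.adjMatrix ℝ *ᵥ z := by
  set z := y + (Pi.single i (y j) - Pi.single j (y j))
  have hz : ∀ k, z k = if k = j then 0 else if k = i then y i + y j else y k := by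
    intro k
    by_cases hkj : k = j
    · subst hkj; simp [z, hij.symm]
    · by_cases hki : k = i
      · subst hki; simp [z, hij]
      · simp [z, hki, hkj]
  refine ⟨z, fun k => ?_, ?_, ?_, ?_⟩
  · have hy' : ∀ k, 0 ≤ y k := hy
    rw [hz]; split_ifs
    exacts [le_rfl, add_nonneg (hy' i) (hy' j), hy' k]
  · simp [z, sum_add_distrib, sum_sub_distrib]
  · refine (card_le_card fun k hk => ?_).trans_lt (card_erase_lt_of_mem (by simpa using hj))
    simp only [mem_filter, mem_univ, true_and, hz] at hk
    split_ifs at hk with hkj hki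
    · exact absurd rfl hk
    · simp [hki, hi, hij]
    · simp [hkj, hk]
  · rw [dotProduct_mulVec_add_single_sub_single (isSymm_adjMatrix G) (by simp) (by simp)
      (by simp [hadj])]
    nlinarith [mul_nonneg (hy j) (sub_nonneg.mpr hle)]

theorem exists_shift_of_not_adj {y : V → ℝ} (hy : 0 ≤ y) {i j : V} (hij : i ≠ j)
    (hadj : ¬G.Adj i j) (hi : y i ≠ 0) (hj : y j ≠ 0) :
    ∃ z : V → ℝ, 0 ≤ z ∧ ∑ k, z k = ∑ k, y k ∧ #{k | z k ≠ 0} < #{k | y k ≠ 0} ∧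
      y ⬝ᵥ G.adjMatrix ℝ *ᵥ y ≤ z ⬝ᵥ G.adjMatrix ℝ *ᵥ z := by
  rcases le_total ((G.adjMatrix ℝ *ᵥ y) j) ((G.adjMatrix ℝ *ᵥ y) i) with hle | hle
  · exact exists_shift_of_not_adj_of_mulVec_le hy hij hadj hi hj hle
  · exact exists_shift_of_not_adj_of_mulVec_le hy hij.symm (fun h => hadj h.symm) hj hi hle

theorem CliqueFree.dotProduct_mulVec_adjMatrix_le {ω : ℕ} (hG : G.CliqueFree (ω + 1))
    {y : V → ℝ} (hy : 0 ≤ y) :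
    y ⬝ᵥ G.adjMatrix ℝ *ᵥ y ≤ (1 - 1 / ω) * (∑ k, y k) ^ 2 := by
  induction hs : #{k | y k ≠ 0} using Nat.strong_induction_on generalizing y with
  | _ m ih =>
  by_cases hcl : G.IsClique ({k | y k ≠ 0} : Finset V)
  · have hsq := sq_sum_le_mul_sum_sq_of_card_support_le (hG.card_le_of_isClique hcl)
    calc y ⬝ᵥ G.adjMatrix ℝ *ᵥ y ≤ (∑ k, y k) ^ 2 - ∑ k, y k ^ 2 :=
          G.dotProduct_mulVec_adjMatrix_le_sq_sum_sub_sum_sq hy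
      _ ≤ (∑ k, y k) ^ 2 - (∑ k, y k) ^ 2 / ω := by
          gcongr
          exact div_le_of_le_mul₀ (by positivity) (by positivity) (by linarith)
      _ = (1 - 1 / ω) * (∑ k, y k) ^ 2 := by ring
  · simp only [IsClique, Set.Pairwise, coe_filter, mem_univ, true_and, not_forall] at hcl
    obtain ⟨i, hi, j, hj, hij, hadj⟩ := hcl
    obtain ⟨z, hz, hsum, hcard, hle⟩ := exists_shift_of_not_adj hy hij hadj hi hj
    calc y ⬝ᵥ G.adjMatrix ℝ *ᵥ y ≤ z ⬝ᵥ G.adjMatrix ℝ *ᵥ z := hle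
      _ ≤ (1 - 1 / ω) * (∑ k, z k) ^ 2 := ih _ (hs ▸ hcard) hz rfl
      _ = (1 - 1 / ω) * (∑ k, y k) ^ 2 := by rw [hsum]

end SimpleGraph

theorem eq_mul_of_zero_lt_mul_mul {a s t : ℝ} (ha : a = 0 ∨ a = 1 ∨ a = -1) (h : 0 < a * s * t) :
    a = (if s < 0 then -1 else 1) * (if t < 0 then -1 else 1) := by
  rcases ha with rfl | rfl | rfl
  · simp at h
  all_goals split_ifs <;> nlinarith

section SignedGraph

variable {n : ℕ} {A : Matrix (Fin n) (Fin n) ℝ}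

theorem walkSign_eq_mul {G : SimpleGraph (Fin n)} (ε : Fin n → ℝ) {u v : Fin n}
    (w : G.Walk u v) (hε : ∀ k ∈ w.support, ε k ^ 2 = 1)
    (hA : ∀ d ∈ w.darts, A d.fst d.snd = ε d.fst * ε d.snd) :
    walkSign A w = ε u * ε v := by
  induction w with
  | nil => simpa [walkSign, sq] using (hε _ (by simp)).symm
  | @cons u w v h p ih =>
    simp only [walkSign, SimpleGraph.Walk.darts_cons, List.map_cons, List.prod_cons] at hA ⊢
    have huw : A u w = ε u * ε w := hA _ List.mem_cons_self
    rw [← walkSign, ih (fun k hk => hε k (by simp [hk])) (fun d hd => hA d (by simp [hd])), huw]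
    linear_combination (ε u * ε v) * hε w (by simp)

theorem isBalancedOn_of_eq_mul {S : Set (Fin n)} (ε : Fin n → ℝ) (hε : ∀ k ∈ S, ε k ^ 2 = 1)
    (hA : ∀ k ∈ S, ∀ l ∈ S, k ≠ l → A k l = ε k * ε l) : IsBalancedOn A S := by
  intro u w _ hS
  rw [walkSign_eq_mul ε w (fun k hk => hε k (hS k hk)) fun d hd =>
      hA _ (hS _ (w.dart_fst_mem_support_of_mem_darts hd)) _
        (hS _ (w.dart_snd_mem_support_of_mem_darts hd)) d.adj.1,
    ← sq, hε u (hS u w.start_mem_support)]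

def positiveGraph (A : Matrix (Fin n) (Fin n) ℝ) (x : Fin n → ℝ) : SimpleGraph (Fin n) :=
  SimpleGraph.fromRel fun k l => 0 < A k l * x k * x l

open Classical in
theorem dotProduct_mulVec_le_positiveGraph (hA : IsSignedAdj A) (x : Fin n → ℝ) :
    x ⬝ᵥ A *ᵥ x ≤ |x| ⬝ᵥ (positiveGraph A x).adjMatrix ℝ *ᵥ |x| := by
  rw [SimpleGraph.dotProduct_mulVec_adjMatrix]
  simp only [dotProduct, mulVec, mul_sum]
  refine sum_le_sum fun k _ => sum_le_sum fun l _ => ?_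
  split_ifs with hadj
  · have hAkl : |A k l| ≤ 1 := by rcases hA.2.2 k l with h | h | h <;> simp [h]
    calc x k * (A k l * x l) ≤ |x k * (A k l * x l)| := le_abs_self _
      _ = |A k l| * (|x k| * |x l|) := by rw [abs_mul, abs_mul]; ring
      _ ≤ |x| k * |x| l := mul_le_of_le_one_left (by positivity) hAkl
  · by_cases hkl : k = l
    · simp [hkl, hA.2.1]
    · have : ¬0 < A k l * x k * x l := fun h => hadj ⟨hkl, Or.inl h⟩
      linarith

theorem isCompleteOn_and_isBalancedOn_of_isClique (hA : IsSignedAdj A) {x : Fin n → ℝ}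
    {S : Set (Fin n)} (hS : (positiveGraph A x).IsClique S) :
    IsCompleteOn A S ∧ IsBalancedOn A S := by
  have hpos : ∀ k ∈ S, ∀ l ∈ S, k ≠ l → 0 < A k l * x k * x l := by
    intro k hk l hl hkl
    rcases (hS hk hl hkl).2 with h | h
    · exact h
    · rw [hA.1 l k] at h; linarith
  refine ⟨fun k hk l hl hkl => ?_, isBalancedOn_of_eq_mul (fun k => if x k < 0 then -1 else 1)
    (fun k _ => by split_ifs <;> norm_num)
    fun k hk l hl hkl => eq_mul_of_zero_lt_mul_mul (hA.2.2 k l) (hpos k hk l hl hkl)⟩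
  exact left_ne_zero_of_mul (left_ne_zero_of_mul (hpos k hk l hl hkl).ne')

theorem le_mul_one_sub_of_mulVec_eq_smul (hA : IsSignedAdj A) {ω : ℕ}
    (hω : ∀ S : Finset (Fin n), IsCompleteOn A S → IsBalancedOn A S → #S ≤ ω)
    {μ : ℝ} {x : Fin n → ℝ} (hx0 : x ≠ 0) (hx : A *ᵥ x = μ • x) :
    μ ≤ n * (1 - 1 / ω) := by
  classical
  have hG : (positiveGraph A x).CliqueFree (ω + 1) := fun S hS => by
    obtain ⟨hc, hb⟩ := isCompleteOn_and_isBalancedOn_of_isClique hA hS.isClique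
    have := hω S hc hb
    have := hS.card_eq
    omega
  have hxx : 0 < x ⬝ᵥ x := lt_of_le_of_ne (sum_nonneg fun k _ => mul_self_nonneg (x k))
    (Ne.symm (dotProduct_self_eq_zero.not.mpr hx0))
  refine le_of_mul_le_mul_right ?_ hxx
  calc μ * (x ⬝ᵥ x) = x ⬝ᵥ A *ᵥ x := by rw [hx, dotProduct_smul, smul_eq_mul]
    _ ≤ |x| ⬝ᵥ (positiveGraph A x).adjMatrix ℝ *ᵥ |x| := dotProduct_mulVec_le_positiveGraph hA x
    _ ≤ (1 - 1 / ω) * (∑ k, |x| k) ^ 2 := hG.dotProduct_mulVec_adjMatrix_le (abs_nonneg x)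
    _ ≤ (1 - 1 / ω) * (n * ∑ k, |x| k ^ 2) := by
        gcongr
        · exact Nat.one_sub_one_div_cast_nonneg ω
        · exact sq_sum_le_mul_sum_sq_of_card_support_le ((card_filter_le _ _).trans (by simp))
    _ = n * (1 - 1 / ω) * (x ⬝ᵥ x) := by
        simp only [Pi.abs_apply, sq_abs, dotProduct, ← sq]; ring

end SignedGraph

/-- If `ω` is the balanced clique number of a signed graph on `n` vertices, then
`λ₁ ≤ n (1 - 1/ω)`. -/
theorem stmt13 {n : ℕ} (A : Matrix (Fin n) (Fin n) ℝ) (hA : IsSignedAdj A) (ω : ℕ)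
    (hω : IsGreatest {m : ℕ | ∃ S : Finset (Fin n), S.card = m ∧
      IsCompleteOn A ↑S ∧ IsBalancedOn A ↑S} ω) :
    lam1 A ≤ (n : ℝ) * (1 - 1 / (ω : ℝ)) :=
  Real.sSup_le (fun _ ⟨_, hx0, hx⟩ => le_mul_one_sub_of_mulVec_eq_smul hA
      (fun S hc hb => hω.2 ⟨S, rfl, hc, hb⟩) hx0 hx)
    (mul_nonneg n.cast_nonneg (Nat.one_sub_one_div_cast_nonneg ω))
end

section
/- Let Γ be a signed graph on n ≥ 2r vertices for an integer r ≥ 4, and let -Γ be its negation. If the spectral radius ρ(Γ) > n - 2 and -Γ contains no balanced complete subgraph on r+1 vertices (equivalently, -Γ is K⁺_{r+1}-free), then ρ(Γ) = λ_1(Γ), i.e., the spectral radius is attained by the largest eigenvalue rather than by -λ_n(Γ). -/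
open Matrix BigOperators

/-!
Let `B = -A`. For an eigenvector `x` of `B` with eigenvalue `μ`,
`μ ‖x‖² = ∑ B i j * x i * x j ≤ ∑ [B i j * x i * x j > 0] |x i| |x j|`.
The pairs with a positive term form a graph; on any of its cliques, switching by the signs of `x`
makes every edge of `B` positive, so the clique is complete and balanced in `B`. Hence that graph
is `K_{r+1}`-free, and the Motzkin–Straus inequality together with Cauchy–Schwarz bounds the right
side by `(1 - 1/r) n ‖x‖²`. So `λ₁(-A) ≤ (1 - 1/r) n ≤ n - 2` as `n ≥ 2r`, and `ρ > n - 2` forces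
`ρ = λ₁(A)`.

Motzkin–Straus is proved by moving the weight of a vertex onto a non-neighbour with larger
`(adjMatrix *ᵥ y)`-value, which does not decrease the quadratic form, until the support is a clique.
-/

open Matrix Finset

theorem sq_sum_le_card_support_mul_sum_sq {ι : Type*} [Fintype ι] (y : ι → ℝ) :
    (∑ i, y i) ^ 2 ≤ #{i | y i ≠ 0} * ∑ i, y i ^ 2 := by
  calc (∑ i, y i) ^ 2 = (∑ i ∈ {i | y i ≠ 0}, y i) ^ 2 := by rw [sum_filter_ne_zero]
    _ ≤ #{i | y i ≠ 0} * ∑ i ∈ {i | y i ≠ 0}, y i ^ 2 := sq_sum_le_card_mul_sum_sq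
    _ = #{i | y i ≠ 0} * ∑ i, y i ^ 2 := by
      congr 1
      exact sum_filter_of_ne fun i _ h => by simpa using h

namespace SimpleGraph

variable {V : Type*} {G : SimpleGraph V}

theorem IsClique.card_le_of_cliqueFree {r : ℕ} {s : Finset V} (hs : G.IsClique (s : Set V))
    (hG : G.CliqueFree (r + 1)) : #s ≤ r := by
  by_contra! h
  obtain ⟨t, hts, ht⟩ := exists_subset_card_eq h
  exact hG t ⟨hs.subset (by simpa using hts), ht⟩

variable [Fintype V] [DecidableRel G.Adj]

theorem dotProduct_mulVec_adjMatrix_le_sq_sum_sub {y : V → ℝ} (hy : 0 ≤ y) :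
    y ⬝ᵥ G.adjMatrix ℝ *ᵥ y ≤ (∑ i, y i) ^ 2 - ∑ i, y i ^ 2 := by
  classical
  have hdiag : ∑ i, y i ^ 2 = ∑ i, ∑ j, if i = j then y i * y j else 0 := by
    simp [sq]
  have hterm : ∀ i j, ((if G.Adj i j then y i * y j else 0) + if i = j then y i * y j else 0)
      ≤ y i * y j := by
    intro i j
    have := mul_nonneg (hy i) (hy j)
    split_ifs with hadj heq
    · exact absurd heq hadj.ne
    all_goals linarith
  rw [dotProduct_mulVec_adjMatrix, hdiag, le_sub_iff_add_le, ← sum_add_distrib, sq, sum_mul_sum]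
  exact sum_le_sum fun i _ => (sum_add_distrib).symm.le.trans (sum_le_sum fun j _ => hterm i j)

variable [DecidableEq V]

theorem dotProduct_mulVec_adjMatrix_shift {a b : V} (hab : ¬G.Adj a b) (y : V → ℝ) (t : ℝ) :
    (y + t • (Pi.single a 1 - Pi.single b 1)) ⬝ᵥ G.adjMatrix ℝ *ᵥ
        (y + t • (Pi.single a 1 - Pi.single b 1)) =
      y ⬝ᵥ G.adjMatrix ℝ *ᵥ y +
        2 * t * ((G.adjMatrix ℝ *ᵥ y) a - (G.adjMatrix ℝ *ᵥ y) b) := by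
  have hcol : ∀ c, y ⬝ᵥ (G.adjMatrix ℝ).col c = (G.adjMatrix ℝ *ᵥ y) c := fun c => by
    simp only [col, mulVec, dotProduct, transpose_apply, adjMatrix_apply, G.adj_comm c, mul_comm]
  simp only [mulVec_add, dotProduct_add, add_dotProduct, mulVec_smul, mulVec_sub,
    sub_dotProduct, dotProduct_sub, smul_dotProduct, dotProduct_smul, mulVec_single_one,
    single_one_dotProduct, hcol]
  simp [hab, G.adj_comm b a |>.not.mpr hab]
  ring

theorem exists_smaller_support_of_not_adj {y : V → ℝ} (hy : 0 ≤ y) {a b : V} (hab : a ≠ b)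
    (hadj : ¬G.Adj a b) (ha : y a ≠ 0) (hb : y b ≠ 0) :
    ∃ z : V → ℝ, 0 ≤ z ∧ ∑ i, z i = ∑ i, y i ∧ #{i | z i ≠ 0} < #{i | y i ≠ 0} ∧
      y ⬝ᵥ G.adjMatrix ℝ *ᵥ y ≤ z ⬝ᵥ G.adjMatrix ℝ *ᵥ z := by
  wlog hd : (G.adjMatrix ℝ *ᵥ y) b ≤ (G.adjMatrix ℝ *ᵥ y) a generalizing a b with H
  · exact H hab.symm (fun h => hadj h.symm) hb ha (le_of_not_ge hd)
  set z := y + y b • (Pi.single a 1 - Pi.single b 1) with hz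
  have hza : z a = y a + y b := by simp [hz, hab]
  have hzb : z b = 0 := by simp [hz, hab.symm]
  have hzi : ∀ i, i ≠ a → i ≠ b → z i = y i := fun i hia hib => by simp [hz, hia, hib]
  refine ⟨z, fun i => show (0 : ℝ) ≤ z i from ?_, ?_, ?_, ?_⟩
  · by_cases hia : i = a
    · rw [hia, hza]; exact add_nonneg (hy a) (hy b)
    by_cases hib : i = b
    · rw [hib, hzb]
    rw [hzi i hia hib]; exact hy i
  · simp [hz, sum_add_distrib, ← mul_sum]
  · refine card_lt_card ⟨fun i hi => ?_, fun h => ?_⟩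
    · by_cases hia : i = a
      · simpa [hia] using ha
      by_cases hib : i = b
      · simp [hib, hzb] at hi
      simpa [hzi i hia hib] using hi
    · exact (by simpa using h (by simpa using hb) : z b ≠ 0) hzb
  · rw [hz, dotProduct_mulVec_adjMatrix_shift hadj]
    have := mul_nonneg (hy b) (sub_nonneg.mpr hd)
    linarith

/-- The Motzkin–Straus inequality. -/
theorem dotProduct_mulVec_adjMatrix_le_of_cliqueFree {r : ℕ} (hG : G.CliqueFree (r + 1))
    {y : V → ℝ} (hy : 0 ≤ y) :
    y ⬝ᵥ G.adjMatrix ℝ *ᵥ y ≤ (1 - 1 / r) * (∑ i, y i) ^ 2 := by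
  induction hk : #{i | y i ≠ 0} using Nat.strong_induction_on generalizing y with
  | _ k ih =>
  by_cases hcl : G.IsClique ({i | y i ≠ 0} : Finset V)
  · have hcard : (∑ i, y i) ^ 2 ≤ r * ∑ i, y i ^ 2 :=
      (sq_sum_le_card_support_mul_sum_sq y).trans <| by
        gcongr
        exact_mod_cast hcl.card_le_of_cliqueFree hG
    have hdiv : (∑ i, y i) ^ 2 / r ≤ ∑ i, y i ^ 2 :=
      div_le_of_le_mul₀ (Nat.cast_nonneg r) (sum_nonneg fun i _ => sq_nonneg _)
        (by linarith)
    calc y ⬝ᵥ G.adjMatrix ℝ *ᵥ y ≤ (∑ i, y i) ^ 2 - ∑ i, y i ^ 2 :=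
          dotProduct_mulVec_adjMatrix_le_sq_sum_sub hy
      _ ≤ (1 - 1 / r) * (∑ i, y i) ^ 2 := by
        rw [sub_mul, one_mul, one_div_mul_eq_div]
        linarith
  · obtain ⟨a, ha, b, hb, hab, hadj⟩ : ∃ a, y a ≠ 0 ∧ ∃ b, y b ≠ 0 ∧ a ≠ b ∧ ¬G.Adj a b := by
      simpa [IsClique, Set.Pairwise] using hcl
    obtain ⟨z, hz, hsum, hsupp, hle⟩ := exists_smaller_support_of_not_adj hy hab hadj ha hb
    rw [← hsum]
    exact hle.trans (ih _ (hk ▸ hsupp) hz rfl)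

end SimpleGraph

theorem IsSignedAdj.neg {n : ℕ} {B : Matrix (Fin n) (Fin n) ℝ} (hB : IsSignedAdj B) :
    IsSignedAdj (-B) := by
  obtain ⟨hsymm, hdiag, hent⟩ := hB
  refine ⟨fun i j => by simp [hsymm i j], fun i => by simp [hdiag i], fun i j => ?_⟩
  rcases hent i j with h | h | h <;> simp [h]

theorem IsSignedAdj.abs_le_one {n : ℕ} {B : Matrix (Fin n) (Fin n) ℝ} (hB : IsSignedAdj B)
    (i j : Fin n) : |B i j| ≤ 1 := by
  rcases hB.2.2 i j with h | h | h <;> simp [h]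

theorem walkSign_eq_mul_of_switching {n : ℕ} {B : Matrix (Fin n) (Fin n) ℝ}
    {G : SimpleGraph (Fin n)} {σ : Fin n → ℝ} {S : Set (Fin n)} (hσ : ∀ i ∈ S, σ i * σ i = 1)
    (hB : ∀ i ∈ S, ∀ j ∈ S, G.Adj i j → B i j = σ i * σ j) {u v : Fin n} (w : G.Walk u v)
    (hw : ∀ z ∈ w.support, z ∈ S) : walkSign B w = σ u * σ v := by
  induction w with
  | nil => exact (hσ _ (hw _ (by simp))).symm
  | @cons u b v h p ih =>
    have hu : u ∈ S := hw u (by simp)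
    have hb : b ∈ S := hw b (by simp [p.start_mem_support])
    calc walkSign B (.cons h p) = B u b * walkSign B p := by simp [walkSign]
      _ = σ u * σ v * (σ b * σ b) := by
        rw [hB u hu b hb h, ih fun z hz => hw z (by simp [hz])]; ring
      _ = σ u * σ v := by rw [hσ b hb, mul_one]

theorem isBalancedOn_of_switching {n : ℕ} {B : Matrix (Fin n) (Fin n) ℝ} {σ : Fin n → ℝ}
    {S : Set (Fin n)} (hσ : ∀ i ∈ S, σ i * σ i = 1)
    (hB : ∀ i ∈ S, ∀ j ∈ S, i ≠ j → B i j = σ i * σ j) : IsBalancedOn B S :=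
  fun u w _ hw => by
    rw [walkSign_eq_mul_of_switching hσ (fun i hi j hj h => hB i hi j hj h.ne) w hw,
      hσ u (hw u w.start_mem_support)]

def positiveTermGraph {n : ℕ} (B : Matrix (Fin n) (Fin n) ℝ) (x : Fin n → ℝ) :
    SimpleGraph (Fin n) :=
  .fromRel fun i j => 0 < B i j * x i * x j

theorem positiveTermGraph_adj {n : ℕ} {B : Matrix (Fin n) (Fin n) ℝ} (hB : IsSignedAdj B)
    {x : Fin n → ℝ} {i j : Fin n} :
    (positiveTermGraph B x).Adj i j ↔ i ≠ j ∧ 0 < B i j * x i * x j := by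
  have : B j i * x j * x i = B i j * x i * x j := by rw [hB.1 j i]; ring
  simp [positiveTermGraph, this]

/-- On a clique, `B i j = σ i * σ j` for the signs `σ` of `x`, so the clique is balanced. -/
theorem positiveTermGraph_cliqueFree {n r : ℕ} {B : Matrix (Fin n) (Fin n) ℝ}
    (hB : IsSignedAdj B)
    (hfree : ¬ ∃ S : Finset (Fin n), S.card = r + 1 ∧ IsCompleteOn B ↑S ∧ IsBalancedOn B ↑S)
    (x : Fin n → ℝ) : (positiveTermGraph B x).CliqueFree (r + 1) := by
  rintro S ⟨hS, hcard⟩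
  set σ : Fin n → ℝ := fun i => if x i < 0 then -1 else 1
  have hσσ : ∀ i, σ i * σ i = 1 := fun i => by simp only [σ]; split_ifs <;> norm_num
  have hσx : ∀ i, σ i * x i = |x i| := fun i => by
    simp only [σ]; split_ifs with h
    · rw [abs_of_neg h]; ring
    · rw [abs_of_nonneg (not_lt.mp h), one_mul]
  have hpos : ∀ i ∈ S, ∀ j ∈ S, i ≠ j → 0 < B i j * x i * x j := fun i hi j hj hij =>
    ((positiveTermGraph_adj hB).mp (hS hi hj hij)).2
  refine hfree ⟨S, hcard, fun i hi j hj hij h => ?_, isBalancedOn_of_switching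
    (fun i _ => hσσ i) fun i hi j hj hij => ?_⟩
  · simpa [h] using hpos i hi j hj hij
  · have hp := hpos i hi j hj hij
    have hxx : x i * x j ≠ 0 := fun h => by simp [mul_assoc, h] at hp
    have habs : |B i j| = 1 := by
      rcases hB.2.2 i j with h | h | h <;> simp_all
    apply mul_right_cancel₀ hxx
    calc B i j * (x i * x j) = |B i j * x i * x j| := by rw [abs_of_pos hp, mul_assoc]
      _ = σ i * x i * (σ j * x j) := by rw [hσx, hσx, abs_mul, abs_mul, habs, one_mul]
      _ = σ i * σ j * (x i * x j) := by ring

open Classical in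
theorem dotProduct_mulVec_le_positiveTermGraph {n : ℕ} {B : Matrix (Fin n) (Fin n) ℝ}
    (hB : IsSignedAdj B) (x : Fin n → ℝ) :
    x ⬝ᵥ B *ᵥ x ≤
      (fun i => |x i|) ⬝ᵥ (positiveTermGraph B x).adjMatrix ℝ *ᵥ fun i => |x i| := by
  rw [SimpleGraph.dotProduct_mulVec_adjMatrix]
  simp only [dotProduct, mulVec, mul_sum]
  gcongr with i _ j _
  split_ifs with hadj
  · calc x i * (B i j * x j) ≤ |B i j| * (|x i| * |x j|) := by
          rw [← abs_mul, ← abs_mul]; exact (le_abs_self _).trans_eq (by ring_nf)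
      _ ≤ |x i| * |x j| := mul_le_of_le_one_left (by positivity) (hB.abs_le_one i j)
  · rw [positiveTermGraph_adj hB, not_and_or, not_not, not_lt] at hadj
    rcases hadj with rfl | h
    · simp [hB.2.1]
    · linarith [show x i * (B i j * x j) = B i j * x i * x j by ring]

theorem eigenvalue_le_of_balancedCliqueFree {n r : ℕ} {B : Matrix (Fin n) (Fin n) ℝ}
    (hB : IsSignedAdj B)
    (hfree : ¬ ∃ S : Finset (Fin n), S.card = r + 1 ∧ IsCompleteOn B ↑S ∧ IsBalancedOn B ↑S)
    {μ : ℝ} {x : Fin n → ℝ} (hx : x ≠ 0) (hμ : B *ᵥ x = μ • x) :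
    μ ≤ (1 - 1 / r) * n := by
  classical
  set y : Fin n → ℝ := fun i => |x i|
  have hxx : 0 < x ⬝ᵥ x :=
    lt_of_le_of_ne (sum_nonneg fun i _ => mul_self_nonneg (x i))
      (Ne.symm (dotProduct_self_eq_zero.not.mpr hx))
  have hyy : ∑ i, y i ^ 2 = x ⬝ᵥ x := by simp [y, dotProduct, sq]
  have hcs : (∑ i, y i) ^ 2 ≤ n * ∑ i, y i ^ 2 := by
    simpa using sq_sum_le_card_mul_sum_sq (s := univ) (f := y)
  have hr : 0 ≤ 1 - 1 / (r : ℝ) := Nat.one_sub_one_div_cast_nonneg r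
  refine le_of_mul_le_mul_right ?_ hxx
  calc μ * (x ⬝ᵥ x) = x ⬝ᵥ B *ᵥ x := by rw [hμ, dotProduct_smul, smul_eq_mul]
    _ ≤ y ⬝ᵥ (positiveTermGraph B x).adjMatrix ℝ *ᵥ y :=
      dotProduct_mulVec_le_positiveTermGraph hB x
    _ ≤ (1 - 1 / r) * (∑ i, y i) ^ 2 :=
      SimpleGraph.dotProduct_mulVec_adjMatrix_le_of_cliqueFree
        (positiveTermGraph_cliqueFree hB hfree x) fun i => abs_nonneg (x i)
    _ ≤ (1 - 1 / r) * n * (x ⬝ᵥ x) := by rw [mul_assoc, ← hyy]; gcongr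

theorem lam1_le_of_balancedCliqueFree {n r : ℕ} {B : Matrix (Fin n) (Fin n) ℝ}
    (hB : IsSignedAdj B)
    (hfree : ¬ ∃ S : Finset (Fin n), S.card = r + 1 ∧ IsCompleteOn B ↑S ∧ IsBalancedOn B ↑S) :
    lam1 B ≤ (1 - 1 / r) * n :=
  Real.sSup_le (fun _ ⟨_, hx, hμ⟩ => eigenvalue_le_of_balancedCliqueFree hB hfree hx hμ) <|
    mul_nonneg (Nat.one_sub_one_div_cast_nonneg r) n.cast_nonneg

/-- If `n ≥ 2r`, `r ≥ 4`, `ρ(Γ) > n - 2` and `-Γ` has no balanced complete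
subgraph on `r+1` vertices, then `ρ(Γ) = λ₁(Γ)`. -/
theorem stmt14 {n r : ℕ} (hr : 4 ≤ r) (hn : 2 * r ≤ n) (A : Matrix (Fin n) (Fin n) ℝ)
    (hA : IsSignedAdj A)
    (hrho : (n : ℝ) - 2 < max (lam1 A) (lam1 (-A)))
    (hfree : ¬ ∃ S : Finset (Fin n), S.card = r + 1 ∧
      IsCompleteOn (-A) ↑S ∧ IsBalancedOn (-A) ↑S) :
    max (lam1 A) (lam1 (-A)) = lam1 A := by
  have hneg : lam1 (-A) ≤ n - 2 := by
    have hr' : (0 : ℝ) < r := by exact_mod_cast (by omega : 0 < r)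
    have hn' : 2 * (r : ℝ) ≤ n := by exact_mod_cast hn
    calc lam1 (-A) ≤ (1 - 1 / r) * n := lam1_le_of_balancedCliqueFree hA.neg hfree
      _ = n - n / r := by ring
      _ ≤ n - 2 := by rw [sub_le_sub_iff_left, le_div_iff₀ hr']; linarith
  rcases lt_max_iff.mp hrho with h | h
  · exact max_eq_left (by linarith)
  · linarith
end
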